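/- (Ingleton's Theorem) Let (K, |·|) be a spherically complete nonarchimedean valued field, let E be a K-vector space equipped with an ultrametric vector seminorm p, let F be a vector subspace of E, and let f : F → K be a K-linear map with |f(x)| ≤ p(x) for all x ∈ F. Then there exists a K-linear map f̃ : E → K extending f such that |f̃(x)| ≤ p(x) for all x ∈ E. -/

import Mathlib

/-!
As for Hahn–Banach, Zorn's lemma reduces the theorem to extending a dominated partial map `g`
with domain `D` to `D ⊕ K y`. Such an extension, with `y ↦ k`, is dominated by `p` as soon as
`v (k + g z) ≤ p (z + y)` for all `z ∈ D`, by homogeneity. So `k` must lie in every closed ball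
`B(-g z, p (z + y))`. Any two of these balls meet, because
`v (g z - g z') ≤ p (z - z') ≤ max (p (z + y)) (p (z' + y))`, and intersecting balls of an
ultrametric field are nested; spherical completeness then yields a common point `k`.
-/

/-- A closed ball of a valued field `(K, v)`: a set of the form `{x | v (x - c) ≤ r}`
with `r ≥ 0`. -/
def IsClosedBall {K : Type*} [Field K] (v : AbsoluteValue K ℝ) (s : Set K) : Prop :=
  ∃ (c : K) (r : ℝ), 0 ≤ r ∧ s = {x : K | v (x - c) ≤ r}

/-- A valued field `(K, v)` is spherically complete if every chain of closed balls
has nonempty intersection. -/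
def SphericallyComplete {K : Type*} [Field K] (v : AbsoluteValue K ℝ) : Prop :=
  ∀ B : Set (Set K), (∀ b ∈ B, IsClosedBall v b) → IsChain (· ⊆ ·) B → (⋂₀ B).Nonempty

variable {K : Type*} [Field K] {v : AbsoluteValue K ℝ}

theorem IsNonarchimedean.setOf_le_subset (hna : IsNonarchimedean v) {c c' : K} {r r' : ℝ}
    (hr : r ≤ r') (hc : v (c - c') ≤ r') :
    {x | v (x - c) ≤ r} ⊆ {x | v (x - c') ≤ r'} := by
  intro x hx
  calc v (x - c') = v ((x - c) + (c - c')) := by rw [sub_add_sub_cancel]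
    _ ≤ max (v (x - c)) (v (c - c')) := hna _ _
    _ ≤ r' := max_le ((show v (x - c) ≤ r from hx).trans hr) hc

theorem SphericallyComplete.exists_forall_le (hsc : SphericallyComplete v)
    (hna : IsNonarchimedean v) {ι : Type*} (c : ι → K) (r : ι → ℝ) (hr : ∀ i, 0 ≤ r i)
    (hc : ∀ i j, v (c i - c j) ≤ max (r i) (r j)) :
    ∃ k, ∀ i, v (k - c i) ≤ r i := by
  have hball : ∀ b ∈ Set.range fun i => {x | v (x - c i) ≤ r i}, IsClosedBall v b := by
    rintro _ ⟨i, rfl⟩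
    exact ⟨c i, r i, hr i, rfl⟩
  have hchain : IsChain (· ⊆ ·) (Set.range fun i => {x | v (x - c i) ≤ r i}) := by
    rintro _ ⟨i, rfl⟩ _ ⟨j, rfl⟩ -
    rcases le_total (r i) (r j) with h | h
    · exact Or.inl (hna.setOf_le_subset h ((hc i j).trans_eq (max_eq_right h)))
    · exact Or.inr (hna.setOf_le_subset h ((hc j i).trans_eq (max_eq_right h)))
  obtain ⟨k, hk⟩ := hsc _ hball hchain
  exact ⟨k, fun i => hk _ ⟨i, rfl⟩⟩

structure IsUltrametricSeminorm (v : AbsoluteValue K ℝ) {E : Type*} [AddCommGroup E]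
    [Module K E] (p : E → ℝ) : Prop where
  map_smul : ∀ (c : K) (x : E), p (c • x) = v c * p x
  isNonarchimedean : IsNonarchimedean p

namespace IsUltrametricSeminorm

variable {E : Type*} [AddCommGroup E] [Module K E] {p : E → ℝ}

theorem map_neg (hp : IsUltrametricSeminorm v p) (x : E) : p (-x) = p x := by
  rw [← neg_one_smul K x, hp.map_smul, v.map_neg, v.map_one, one_mul]

theorem nonneg (hp : IsUltrametricSeminorm v p) (x : E) : 0 ≤ p x := by
  have h := hp.isNonarchimedean x (-x)
  rw [add_neg_cancel, ← zero_smul K (0 : E), hp.map_smul, v.map_zero, zero_mul,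
    hp.map_neg, max_self] at h
  exact h

theorem map_sub_le_max (hp : IsUltrametricSeminorm v p) (x y : E) :
    p (x - y) ≤ max (p x) (p y) := by
  simpa only [sub_eq_add_neg, hp.map_neg] using hp.isNonarchimedean x (-y)

end IsUltrametricSeminorm

section Extension

variable (v) {E : Type*} [AddCommGroup E] [Module K E]

def DominatedBy (p : E → ℝ) (g : E →ₗ.[K] K) : Prop :=
  ∀ x : g.domain, v (g x) ≤ p x

variable {v} {p : E → ℝ}

theorem dominatedBy_supSpanSingleton_of_forall {g : E →ₗ.[K] K} {y : E} (hy : y ∉ g.domain)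
    {k : K} (h : ∀ (z : g.domain) (c : K), v (g z + c * k) ≤ p (z + c • y)) :
    DominatedBy v p (g.supSpanSingleton y k hy) := by
  rintro ⟨w, hw⟩
  rw [LinearPMap.domain_supSpanSingleton] at hw
  obtain ⟨z, hz, _, hcy, rfl⟩ := Submodule.mem_sup.1 hw
  obtain ⟨c, rfl⟩ := Submodule.mem_span_singleton.1 hcy
  rw [LinearPMap.supSpanSingleton_apply_mk _ _ _ _ _ hz]
  exact h ⟨z, hz⟩ c

theorem DominatedBy.exists_supSpanSingleton (hna : IsNonarchimedean v)
    (hsc : SphericallyComplete v) (hp : IsUltrametricSeminorm v p) {g : E →ₗ.[K] K}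
    (hg : DominatedBy v p g) {y : E} (hy : y ∉ g.domain) :
    ∃ k, DominatedBy v p (g.supSpanSingleton y k hy) := by
  have hc : ∀ z z' : g.domain, v (-g z - -g z') ≤ max (p (z + y)) (p (z' + y)) := by
    intro z z'
    calc v (-g z - -g z') = v (g (z' - z)) := by rw [g.map_sub]; ring_nf
      _ ≤ p ((z' : E) - z) := hg _
      _ = p ((z' + y) - (z + y)) := by congr 1; abel
      _ ≤ max (p (z + y)) (p (z' + y)) := (hp.map_sub_le_max _ _).trans_eq (max_comm _ _)
  obtain ⟨k, hk⟩ := hsc.exists_forall_le hna (fun z => -g z) (fun z => p (z + y))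
    (fun _ => hp.nonneg _) hc
  refine ⟨k, dominatedBy_supSpanSingleton_of_forall hy fun z c => ?_⟩
  rcases eq_or_ne c 0 with rfl | hc0
  · simpa using hg z
  have hval : g z + c * k = c * (k - -g (c⁻¹ • z)) := by
    rw [g.map_smul, smul_eq_mul]; field_simp; ring
  have hvec : (z : E) + c • y = c • ((c⁻¹ • z : g.domain) + y) := by
    rw [Submodule.coe_smul, smul_add, smul_inv_smul₀ hc0]
  rw [hval, hvec, v.map_mul, hp.map_smul]
  exact mul_le_mul_of_nonneg_left (hk _) (v.nonneg c)

theorem dominatedBy_sSup {c : Set (E →ₗ.[K] K)} (hne : c.Nonempty)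
    (hcd : DirectedOn (· ≤ ·) c) (hc : ∀ g ∈ c, DominatedBy v p g) :
    DominatedBy v p (LinearPMap.sSup c hcd) := by
  rintro ⟨x, hx⟩
  obtain ⟨g, hgc, hxg⟩ := (LinearPMap.mem_domain_sSup_iff hne hcd).1 hx
  exact (congrArg v (LinearPMap.sSup_apply hcd hgc ⟨x, hxg⟩)).trans_le (hc g hgc ⟨x, hxg⟩)

theorem DominatedBy.exists_le_domain_eq_top (hna : IsNonarchimedean v)
    (hsc : SphericallyComplete v) (hp : IsUltrametricSeminorm v p) {f : E →ₗ.[K] K}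
    (hf : DominatedBy v p f) :
    ∃ g ≥ f, g.domain = ⊤ ∧ DominatedBy v p g := by
  obtain ⟨g, hfg, hg, hmax⟩ := zorn_le_nonempty₀ {g | DominatedBy v p g}
    (fun c hcS hchain _ hy => ⟨LinearPMap.sSup c hchain.directedOn,
      dominatedBy_sSup ⟨_, hy⟩ hchain.directedOn hcS,
      fun _ => LinearPMap.le_sSup hchain.directedOn⟩) f hf
  refine ⟨g, hfg, ?_, hg⟩
  by_contra hdom
  obtain ⟨y, -, hy⟩ := SetLike.exists_of_lt (lt_top_iff_ne_top.2 hdom)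
  obtain ⟨k, hk⟩ := hg.exists_supSpanSingleton hna hsc hp hy
  have hle := LinearPMap.domain_mono.monotone (hmax hk (g.left_le_sup _ _))
  exact hy (hle (Submodule.mem_sup_right (Submodule.mem_span_singleton_self y)))

end Extension

/-- **Ingleton's Theorem.** Let `(K, v)` be a spherically complete
nonarchimedean valued field, let `E` be a `K`-vector space equipped with an ultrametric
vector seminorm `p`, let `F` be a vector subspace of `E`, and let `f : F → K` be a
`K`-linear map with `v (f x) ≤ p x` for all `x ∈ F`.  Then there exists a `K`-linear map
`f̃ : E → K` extending `f` such that `v (f̃ x) ≤ p x` for all `x ∈ E`. -/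
theorem ingleton_theorem (K : Type u) [Field K] (v : AbsoluteValue K ℝ)
    (hna : ∀ x y : K, v (x + y) ≤ max (v x) (v y))
    (hsc : SphericallyComplete v)
    (E : Type w) [AddCommGroup E] [Module K E] (p : E → ℝ)
    (hp_smul : ∀ (c : K) (x : E), p (c • x) = v c * p x)
    (hp_ultra : ∀ x y : E, p (x + y) ≤ max (p x) (p y))
    (F : Submodule K E) (f : F →ₗ[K] K) (hf : ∀ x : F, v (f x) ≤ p x) :
    ∃ g : E →ₗ[K] K, (∀ x : F, g (x : E) = f x) ∧ ∀ x : E, v (g x) ≤ p x := by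
  obtain ⟨⟨D, g⟩, ⟨-, hfg⟩, rfl : D = ⊤, hg⟩ :=
    DominatedBy.exists_le_domain_eq_top (f := ⟨F, f⟩) hna hsc ⟨hp_smul, hp_ultra⟩ hf
  exact ⟨g.comp (LinearMap.id.codRestrict ⊤ fun _ => trivial), fun x => (hfg rfl).symm,
    fun x => hg ⟨x, trivial⟩⟩
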